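/- Let Δ' and Δ'' be distributions of Σ such that Δ' is substitutable into the i-th component of Δ'' (i.e., A(Δ') ⊆ Σ''_i). For any language L ⊆ Σ*, if L is decomposable with respect to Δ' and L is decomposable with respect to Δ'', then L is decomposable with respect to the distribution (Δ' ⊢_i Δ''). -/

import Mathlib

/-- A *distribution* of the (finite) alphabet `α`: a family of non-empty,
pairwise incomparable (under set inclusion) sub-alphabets whose union is `α`.
Its size is `comps.ncard`. -/
structure Distr (α : Type) [Fintype α] where
  comps : Set (Set α)
  comps_nonempty : ∀ S ∈ comps, S.Nonempty
  comps_cover : ∀ a : α, ∃ S ∈ comps, a ∈ S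
  comps_incomp : ∀ S ∈ comps, ∀ T ∈ comps, S ≠ T → ¬ S ⊆ T

section Defs

variable {α : Type} [Fintype α]

/-- Natural projection `P_{Σ'}`: erase from a string all symbols not in `S`. -/
noncomputable def projA (S : Set α) (s : List α) : List α :=
  s.filter fun a => @decide (a ∈ S) (Classical.propDecidable _)

/-- `L` is decomposable with respect to `Δ`:
`L = ∥_i P_{Σ_i}(L) = ⋂_i P_{Σ_i}⁻¹(P_{Σ_i}(L))`. -/
def Decomposable (L : Set (List α)) (Δ : Distr α) : Prop :=
  L = ⋂ S ∈ Δ.comps, projA S ⁻¹' (projA S '' L)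

/-- The partial order `≤_Σ` on distributions: every component of `Δ` is
contained in some component of `Δ'`. -/
def DistLE (Δ Δ' : Distr α) : Prop :=
  ∀ S ∈ Δ.comps, ∃ T ∈ Δ'.comps, S ⊆ T

/-- `P` is a *reduction* of `Δ`. -/
def IsReduction (P : Set (Distr α)) (Δ : Distr α) : Prop :=
  2 ≤ P.ncard ∧
  (∀ Δ' ∈ P, Δ'.comps.ncard < Δ.comps.ncard) ∧
  (∀ L : Set (List α), Decomposable L Δ ↔ ∀ Δ' ∈ P, Decomposable L Δ')

/-- The maximal members (under set inclusion) of a family of sets. -/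
def MaximalMem {β : Type} (F : Set (Set β)) : Set (Set β) :=
  {S | S ∈ F ∧ ∀ T ∈ F, S ⊆ T → S = T}

/-- The dependence relation `D_Δ`. -/
def DepRel (Δ : Distr α) : Set (α × α) :=
  {p | ∃ S ∈ Δ.comps, p.1 ∈ S ∧ p.2 ∈ S}

/-- The independence relation `I_Δ = Σ × Σ − D_Δ`. -/
def IndepRel (Δ : Distr α) : Set (α × α) :=
  {p | ¬ ∃ S ∈ Δ.comps, p.1 ∈ S ∧ p.2 ∈ S}

/-- `Σ' ⊑ Δ`: `Σ'` is contained in some component of `Δ`. -/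
def SqSub (S : Set α) (Δ : Distr α) : Prop :=
  ∃ T ∈ Δ.comps, S ⊆ T

/-- `Δ` is the greatest lower bound of the family `D` with respect to `≤_Σ`. -/
def IsGLBFam {l : ℕ} (D : Fin l → Distr α) (Δ : Distr α) : Prop :=
  (∀ i, DistLE Δ (D i)) ∧
  ∀ Δ''' : Distr α, (∀ i, DistLE Δ''' (D i)) → DistLE Δ''' Δ

/-- `Δ'` is *merged* from `Δ`: `Δ' ≠ (Σ)` and `Δ'` is obtained from a
partition of the components of `Δ` having at least one block of size ≥ 2 by
taking the unions over the blocks and keeping only the maximal resulting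
sub-alphabets. -/
def MergedFrom (Δ' Δ : Distr α) : Prop :=
  Δ'.comps ≠ {Set.univ} ∧
  ∃ part : Set (Set (Set α)),
    (∀ B ∈ part, B.Nonempty) ∧
    (∀ B ∈ part, B ⊆ Δ.comps) ∧
    (∀ B ∈ part, ∀ C ∈ part, B ≠ C → Disjoint B C) ∧
    (∀ S ∈ Δ.comps, ∃ B ∈ part, S ∈ B) ∧
    (∃ B ∈ part, ∃ S ∈ B, ∃ T ∈ B, S ≠ T) ∧
    Δ'.comps = MaximalMem {U : Set α | ∃ B ∈ part, U = ⋃₀ B}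

/-- Membership in the search space `S_Δ`: a set of distributions merged from
`Δ` that are pairwise `≤_Σ`-incomparable. -/
def MemS (Δ : Distr α) (P : Set (Distr α)) : Prop :=
  (∀ Δ' ∈ P, MergedFrom Δ' Δ) ∧
  ∀ Δ₁ ∈ P, ∀ Δ₂ ∈ P, Δ₁ ≠ Δ₂ → ¬ DistLE Δ₁ Δ₂

/-- The ordering `≤_Δ` on sets of distributions: every member of `Q` has a
member of `P` below it with respect to `≤_Σ`. -/
def SetLE (P Q : Set (Distr α)) : Prop :=
  ∀ Δ' ∈ Q, ∃ Δ'' ∈ P, DistLE Δ'' Δ'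

/-- `[F]`: the `≤_Σ`-minimal members of a set of distributions. -/
def MinimalD (F : Set (Distr α)) : Set (Distr α) :=
  {Δ' | Δ' ∈ F ∧ ∀ Δ'' ∈ F, DistLE Δ'' Δ' → DistLE Δ' Δ''}

/-- `Δ'` is obtained from `Δ` by merging exactly two components `S ≠ T`
(and keeping only the maximal sub-alphabets); the members of `⊥(Δ)`. -/
def MinMergedFrom (Δ' Δ : Distr α) : Prop :=
  ∃ S ∈ Δ.comps, ∃ T ∈ Δ.comps, S ≠ T ∧
    Δ'.comps = MaximalMem ((Δ.comps \ {S, T}) ∪ {S ∪ T})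

/-- The set `A(Δ)` of shared symbols of a distribution. -/
def SharedSyms (Δ : Distr α) : Set α :=
  {a | ∃ S ∈ Δ.comps, ∃ T ∈ Δ.comps, S ≠ T ∧ a ∈ S ∧ a ∈ T}

/-- The substitution of `Δ'` into the component `C` of `Δ''` yields `Δs`:
`Δs` is obtained from the components of `Δ''` other than `C` together with the
intersections `C ∩ S` for components `S` of `Δ'`, keeping only the maximal
non-empty members. -/
def SubstResult (Δ' Δ'' : Distr α) (C : Set α) (Δs : Distr α) : Prop :=
  Δs.comps =
    MaximalMem {T : Set α |
      T.Nonempty ∧ (T ∈ Δ''.comps \ {C} ∨ ∃ S ∈ Δ'.comps, T = C ∩ S)}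

/-- One swap of two adjacent symbols forming a pair in `I`. -/
def SwapStep (I : Set (α × α)) (s t : List α) : Prop :=
  ∃ (u v : List α) (a b : α),
    (a, b) ∈ I ∧ s = u ++ a :: b :: v ∧ t = u ++ b :: a :: v

/-- Trace equivalence with respect to `I`: a finite sequence of swaps of
adjacent independent symbols. -/
def TraceEquiv (I : Set (α × α)) : List α → List α → Prop :=
  Relation.ReflTransGen (SwapStep I)

/-- `L` is trace-closed with respect to `I`. -/
def TraceClosed (I : Set (α × α)) (L : Set (List α)) : Prop :=
  L = {t | ∃ s ∈ L, TraceEquiv I s t}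

/-- The map `N` determined by the enumeration `c` of the components of a
distribution: `N(a) = {i : a ∉ Σ_i}`. -/
def Nmap {n : ℕ} (c : Fin n → Set α) (a : α) : Set (Fin n) :=
  {i | a ∉ c i}

/-- A simple path from `x` to `y` in the graph `(Σ, D)`: a list of pairwise
distinct symbols, starting at `x`, ending at `y`, with consecutive symbols
related by `D`. -/
def IsSimplePath (D : Set (α × α)) (p : List α) (x y : α) : Prop :=
  p.Nodup ∧ p.head? = some x ∧ p.getLast? = some y ∧
    p.Chain' (fun a b => (a, b) ∈ D)

/-- `Cr_D(S, y)` (with `N` given by the enumeration `c`): the set of indices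
`i` such that some simple path `p` from some `x ∈ S` to `y` in `(Σ, D)`
satisfies `i ∈ ⋂_{a ∈ p.dropLast} N(a)`. -/
def CrSet {n : ℕ} (c : Fin n → Set α) (D : Set (α × α)) (S : Set α) (y : α) :
    Set (Fin n) :=
  {i | ∃ x ∈ S, ∃ p : List α,
    IsSimplePath D p x y ∧ ∀ a ∈ p.dropLast, i ∈ Nmap c a}

/-- The smallest set of distributions containing `Q` and closed under
substitution. -/
inductive SubstClosure (Q : Set (Distr α)) : Distr α → Prop
  | base (Δ' : Distr α) (h : Δ' ∈ Q) : SubstClosure Q Δ'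
  | step (Δ' Δ'' Δs : Distr α) (C : Set α)
      (h1 : SubstClosure Q Δ') (h2 : SubstClosure Q Δ'')
      (hC : C ∈ Δ''.comps) (hA : SharedSyms Δ' ⊆ C)
      (hs : SubstResult Δ' Δ'' C Δs) : SubstClosure Q Δs

end Defs

section Count

variable {α : Type} [Fintype α] [DecidableEq α]

/-- `L(Σ_j)` (with `j` 0-indexed, so the paper's exponent `j+1` is `j+2`
here): all strings containing exactly one occurrence of each `σ_i ∈ Σ_j` and
exactly `j+2` occurrences of each `σ_i ∉ Σ_j`. -/
def Lword {m : ℕ} (σ : Fin m → α) (Sj : Set α) (j : ℕ) : Set (List α) :=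
  {s | ∀ i : Fin m,
    (σ i ∈ Sj → s.count (σ i) = 1) ∧ (σ i ∉ Sj → s.count (σ i) = j + 2)}

/-- The candidate counter example `L_cand = ⋃_j L(Σ_j)`, relative to an
enumeration `c` of the components and an enumeration `σ` of the alphabet. -/
def Lcand {n m : ℕ} (c : Fin n → Set α) (σ : Fin m → α) : Set (List α) :=
  ⋃ j : Fin n, Lword σ (c j) (j : ℕ)

end Count

/-! A word `s` of the synchronous product for `Δs` agrees with some word of `L` on every component
of `Δ''` other than `C` and on every `C ∩ S` with `S ∈ Δ'`. Two components of `Δ'` overlap only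
inside `C`, so the words of `L` matching `s` on the pieces `C ∩ S` can be glued onto the projection
of `s` to `C`, one component at a time, into a single word `u`. Its projections to the components
of `Δ'` come from `L`, hence `u ∈ L` by decomposability for `Δ'`; and `u` agrees with `s` on `C`.
So `s` lies in the synchronous product for `Δ''`, which is `L`. -/

section Projection

variable {α : Type}

@[simp]
lemma projA_nil (S : Set α) : projA S [] = [] := rfl

@[simp]
lemma projA_cons_of_mem {S : Set α} {a : α} (h : a ∈ S) (s : List α) :
    projA S (a :: s) = a :: projA S s := by
  simp [projA, h]

@[simp]
lemma projA_cons_of_not_mem {S : Set α} {a : α} (h : a ∉ S) (s : List α) :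
    projA S (a :: s) = projA S s := by
  simp [projA, h]

lemma projA_projA (A B : Set α) (s : List α) :
    projA A (projA B s) = projA (A ∩ B) s := by
  unfold projA
  rw [List.filter_filter]
  congr 1
  funext a
  rw [Bool.eq_iff_iff]
  simp

lemma projA_projA_of_subset {A B : Set α} (h : A ⊆ B) (s : List α) :
    projA A (projA B s) = projA A s := by
  rw [projA_projA, Set.inter_eq_left.2 h]

lemma projA_eq_projA_of_subset {A B : Set α} (h : A ⊆ B) {x y : List α}
    (hxy : projA B x = projA B y) : projA A x = projA A y := by
  rw [← projA_projA_of_subset h x, hxy, projA_projA_of_subset h]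

lemma projA_eq_self {S : Set α} {s : List α} (h : ∀ a ∈ s, a ∈ S) : projA S s = s := by
  simpa [projA] using h

@[simp]
lemma projA_empty (s : List α) : projA (∅ : Set α) s = [] := by
  simp [projA]

lemma exists_merge_of_projA_inter_eq {A B : Set α} :
    ∀ {x y : List α}, (∀ a ∈ x, a ∈ A) → (∀ b ∈ y, b ∈ B) →
      projA (A ∩ B) x = projA (A ∩ B) y → ∃ z, projA A z = x ∧ projA B z = y
  | [], y, _, hy, hxy => by
    refine ⟨y, ?_, projA_eq_self hy⟩
    rw [← projA_eq_self hy, projA_projA, ← hxy, projA_nil]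
  | x, [], hx, _, hxy => by
    refine ⟨x, projA_eq_self hx, ?_⟩
    rw [← projA_eq_self hx, projA_projA, Set.inter_comm, hxy, projA_nil]
  | a :: x, b :: y, hx, hy, hxy => by
    have ha : a ∈ A := hx a List.mem_cons_self
    have hb : b ∈ B := hy b List.mem_cons_self
    have hx' : ∀ c ∈ x, c ∈ A := fun c hc => hx c (List.mem_cons_of_mem a hc)
    have hy' : ∀ c ∈ y, c ∈ B := fun c hc => hy c (List.mem_cons_of_mem b hc)
    by_cases haB : a ∈ B
    · by_cases hbA : b ∈ A
      · rw [projA_cons_of_mem (show a ∈ A ∩ B from ⟨ha, haB⟩),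
          projA_cons_of_mem (show b ∈ A ∩ B from ⟨hbA, hb⟩), List.cons_eq_cons] at hxy
        obtain ⟨rfl, hxy⟩ := hxy
        obtain ⟨z, hzA, hzB⟩ := exists_merge_of_projA_inter_eq hx' hy' hxy
        exact ⟨a :: z, by rw [projA_cons_of_mem ha, hzA], by rw [projA_cons_of_mem hb, hzB]⟩
      · rw [projA_cons_of_not_mem (show b ∉ A ∩ B from fun h => hbA h.1)] at hxy
        obtain ⟨z, hzA, hzB⟩ := exists_merge_of_projA_inter_eq hx hy' hxy
        exact ⟨b :: z, by rw [projA_cons_of_not_mem hbA, hzA], by rw [projA_cons_of_mem hb, hzB]⟩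
    · rw [projA_cons_of_not_mem (show a ∉ A ∩ B from fun h => haB h.2)] at hxy
      obtain ⟨z, hzA, hzB⟩ := exists_merge_of_projA_inter_eq hx' hy hxy
      exact ⟨a :: z, by rw [projA_cons_of_mem ha, hzA], by rw [projA_cons_of_not_mem haB, hzB]⟩

lemma mem_of_mem_projA {S : Set α} {a : α} {s : List α} (h : a ∈ projA S s) : a ∈ S := by
  simpa [projA] using (List.mem_filter.1 h).2

lemma exists_projA_eq_of_projA_inter_eq {A B : Set α} {x y : List α}
    (hxy : projA (A ∩ B) x = projA (A ∩ B) y) :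
    ∃ z, projA A z = projA A x ∧ projA B z = projA B y :=
  exists_merge_of_projA_inter_eq (fun _ => mem_of_mem_projA) (fun _ => mem_of_mem_projA) <| by
    rwa [projA_projA_of_subset Set.inter_subset_left,
      projA_projA_of_subset Set.inter_subset_right]

lemma projA_mem_image_of_subset {L : Set (List α)} {T U : Set α} (hTU : T ⊆ U) {s : List α}
    (hs : projA U s ∈ projA U '' L) : projA T s ∈ projA T '' L := by
  obtain ⟨t, ht, hts⟩ := hs
  exact ⟨t, ht, projA_eq_projA_of_subset hTU hts⟩

lemma exists_projA_eq_of_pairwise_inter_subset (L : Set (List α)) {C : Set α}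
    {F : Set (Set α)} (hF : F.Finite) (hFC : F.Pairwise fun S T => S ∩ T ⊆ C) {w : List α}
    (hw : ∀ S ∈ F, projA (C ∩ S) w ∈ projA (C ∩ S) '' L) :
    ∃ u, projA C u = projA C w ∧ ∀ S ∈ F, projA S u ∈ projA S '' L := by
  induction F, hF using Set.Finite.induction_on with
  | empty => exact ⟨w, rfl, by simp⟩
  | @insert S F hSF hF ih =>
    obtain ⟨u, huC, huF⟩ := ih (hFC.mono (Set.subset_insert S F))
      fun T hT => hw T (Set.mem_insert_of_mem S hT)
    obtain ⟨t, ht, htw⟩ := hw S (Set.mem_insert S F)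
    set A := C ∪ ⋃₀ F
    have hAS : A ∩ S ⊆ C ∩ S := by
      rintro a ⟨haC | ⟨T, hT, haT⟩, haS⟩
      · exact ⟨haC, haS⟩
      · exact ⟨hFC (Set.mem_insert_of_mem S hT) (Set.mem_insert S F)
          (fun h => hSF (h ▸ hT)) ⟨haT, haS⟩, haS⟩
    have hut : projA (A ∩ S) u = projA (A ∩ S) t := by
      refine projA_eq_projA_of_subset hAS ?_
      rw [htw, ← projA_projA_of_subset Set.inter_subset_left u, huC,
        projA_projA_of_subset Set.inter_subset_left]
    obtain ⟨z, hzA, hzS⟩ := exists_projA_eq_of_projA_inter_eq hut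
    have hzu : ∀ T ⊆ A, projA T z = projA T u := fun T hT => projA_eq_projA_of_subset hT hzA
    refine ⟨z, (hzu C Set.subset_union_left).trans huC, ?_⟩
    rintro T (rfl | hT)
    · exact ⟨t, ht, hzS.symm⟩
    · rw [hzu T (Set.subset_union_of_subset_right (Set.subset_sUnion_of_mem hT) C)]
      exact huF T hT

lemma projA_mem_image_of_forall_maximalMem {L : Set (List α)} {F : Set (Set α)}
    (hF : F.Finite) {s : List α} (hs : ∀ U ∈ MaximalMem F, projA U s ∈ projA U '' L)
    {T : Set α} (hT : T ∈ F) : projA T s ∈ projA T '' L := by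
  obtain ⟨U, hTU, hU, hUmax⟩ := hF.exists_le_maximal hT
  exact projA_mem_image_of_subset hTU
    (hs U ⟨hU, fun V hV hUV => (hUmax hV hUV).antisymm' hUV⟩)

variable [Fintype α]

lemma decomposable_iff {L : Set (List α)} {Δ : Distr α} :
    Decomposable L Δ ↔ ∀ s, (∀ S ∈ Δ.comps, projA S s ∈ projA S '' L) → s ∈ L := by
  refine ⟨fun h s hs => h ▸ Set.mem_iInter₂.2 hs, fun h => ?_⟩
  refine Set.Subset.antisymm (fun s hs => Set.mem_iInter₂.2 fun S _ => ⟨s, hs, rfl⟩) ?_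
  exact fun s hs => h s (Set.mem_iInter₂.1 hs)

end Projection

/-- If `Δ'` is substitutable into the component `C` of
`Δ''` (i.e. `A(Δ') ⊆ C`) and `L` is decomposable with respect to both `Δ'`
and `Δ''`, then `L` is decomposable with respect to `(Δ' ⊢ Δ'')` (the result
of the substitution). -/
theorem statement_10 {α : Type} [Fintype α] (Δ' Δ'' Δs : Distr α) (C : Set α)
    (hC : C ∈ Δ''.comps) (hsub : SharedSyms Δ' ⊆ C)
    (hΔs : SubstResult Δ' Δ'' C Δs)
    (L : Set (List α)) (h1 : Decomposable L Δ') (h2 : Decomposable L Δ'') :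
    Decomposable L Δs := by
  rw [decomposable_iff] at h1 h2 ⊢
  intro s hs
  rw [hΔs] at hs
  have hsF := fun T => projA_mem_image_of_forall_maximalMem (Set.toFinite _) hs (T := T)
  obtain ⟨a, haC⟩ := Δ''.comps_nonempty C hC
  obtain ⟨S₀, hS₀, haS₀⟩ := Δ'.comps_cover a
  obtain ⟨t₀, ht₀, -⟩ := hsF (C ∩ S₀) ⟨⟨a, haC, haS₀⟩, .inr ⟨S₀, hS₀, rfl⟩⟩
  have hsC : ∀ S ∈ Δ'.comps, projA (C ∩ S) s ∈ projA (C ∩ S) '' L := fun S hS => by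
    rcases (C ∩ S).eq_empty_or_nonempty with hCS | hCS
    · exact ⟨t₀, ht₀, by simp [hCS]⟩
    · exact hsF _ ⟨hCS, .inr ⟨S, hS, rfl⟩⟩
  have hΔ' : Δ'.comps.Pairwise fun S T => S ∩ T ⊆ C :=
    fun S hS T hT hST a ha => hsub ⟨S, hS, T, hT, hST, ha⟩
  obtain ⟨u, huC, hu⟩ := exists_projA_eq_of_pairwise_inter_subset L (Set.toFinite _) hΔ' hsC
  refine h2 s fun T hT => ?_
  by_cases hTC : T = C
  · exact hTC ▸ ⟨u, h1 u hu, huC⟩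
  · exact hsF T ⟨Δ''.comps_nonempty T hT, .inl ⟨hT, hTC⟩⟩
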